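/- The ideal I equals the ideal of ℝ[z₁,…,z_d] generated by the polynomials q_Θ, where Θ ranges over all d×d integer matrices each of whose columns is a 0-1 vector with exactly one or exactly two entries equal to 1 and which satisfy det Θ = ±1. -/

import Mathlib

open MvPolynomial

/-- For a `d×d` integer matrix `Θ` with 0-1 columns, the polynomial
`q_Θ(z) = ∏_{columns θ of Θ} (1 + z^θ)/2`, where `z^θ = z₁^{θ₁}⋯z_d^{θ_d}`. -/
noncomputable def qpoly {d : ℕ} (Θ : Matrix (Fin d) (Fin d) ℤ) : MvPolynomial (Fin d) ℝ :=
  ∏ c : Fin d, (C (1 / 2 : ℝ) * (1 + ∏ i : Fin d, X i ^ (Θ i c).toNat))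

/-!
A generator `q_Θ` vanishes on `Z'`: if `ε ∈ Z'` had `ε^θ = 1` for every column `θ` of `Θ`, the
parity vector of `ε` would be a nonzero element of the kernel of `Θᵀ` over `ZMod 2`, although
`det Θ` is odd.

Conversely, `q_1 = ∏ (1 + z_i)/2` is the indicator of `(1,…,1)` on the cube `{±1}^d`, so by the
combinatorial Nullstellensatz every `p` vanishing on `Z'` is congruent to a multiple of `q_1`
modulo the ideal of the `z_i² - 1`. It remains to show `z_i² - 1 ∈ J`, the ideal generated by
the `q_Θ`, and after permuting the variables `i = 0`. For `c ≠ 0` take the unitriangular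
matrices whose columns are `e_0`, `e_s` for `0 < s < c`, `e_s` or `e_s + e_c` for `s > c`, and
`e_c + e_0` resp. `e_c` at `c`: the difference `q - z₀ q'` of the two choices at `c` is
`(1 - z₀²)` times the rest. As `1 - z_c ∈ (1 + z_s, 1 + z_s z_c)`, eliminating the choices for
`s > c` gives `(1 - z₀²)(1 - z_c)^N ∏_{0<s<c} (1 + z_s) ∈ J`. Since `(1 - z_c)^N` and `1 + z_c`
are coprime, the factors `1 + z_c` can now be removed one at a time, from the top, from
`(1 - z₀²) ∏_{s ≠ 0} (1 + z_s) ∈ J`.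
-/

open Finset
open scoped Matrix

def qpolyGenerators (d : ℕ) : Set (MvPolynomial (Fin d) ℝ) :=
  {q | ∃ Θ : Matrix (Fin d) (Fin d) ℤ,
    (∀ i c, Θ i c = 0 ∨ Θ i c = 1) ∧
    (∀ c, (∑ i, Θ i c) = 1 ∨ (∑ i, Θ i c) = 2) ∧
    (Θ.det = 1 ∨ Θ.det = -1) ∧
    q = qpoly Θ}

noncomputable abbrev qpolyIdeal (d : ℕ) : Ideal (MvPolynomial (Fin d) ℝ) :=
  Ideal.span (qpolyGenerators d)

def puncturedCube (d : ℕ) : Set (Fin d → ℝ) :=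
  {ε | (∀ i, ε i = -1 ∨ ε i = 1) ∧ ε ≠ fun _ => 1}

lemma prod_pow_eq_neg_one_pow {ι : Type*} [Fintype ι] {ε : ι → ℝ}
    (hε : ∀ i, ε i = -1 ∨ ε i = 1) (k : ι → ℕ) :
    ∏ i, ε i ^ k i = (-1) ^ ∑ i, if ε i = 1 then 0 else k i := by
  rw [← prod_pow_eq_pow_sum]
  refine prod_congr rfl fun i _ => ?_
  rcases hε i with h | h <;> norm_num [h]

lemma exists_prod_pow_eq_neg_one {d : ℕ} {Θ : Matrix (Fin d) (Fin d) ℤ}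
    (hΘ : ∀ i c, 0 ≤ Θ i c) (hdet : Odd Θ.det) {ε : Fin d → ℝ} (hε : ε ∈ puncturedCube d) :
    ∃ c, ∏ i, ε i ^ (Θ i c).toNat = -1 := by
  by_contra! h
  set x : Fin d → ZMod 2 := fun i => if ε i = 1 then 0 else 1
  set M := (Int.castRingHom (ZMod 2)).mapMatrix Θ
  have hMx : Mᵀ *ᵥ x = 0 := by
    funext c
    have heven : Even (∑ i, if ε i = 1 then 0 else (Θ i c).toNat) := by
      rcases Nat.even_or_odd (∑ i, if ε i = 1 then 0 else (Θ i c).toNat) with he | ho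
      · exact he
      · exact absurd ((prod_pow_eq_neg_one_pow hε.1 _).trans ho.neg_one_pow) (h c)
    rw [← ZMod.natCast_eq_zero_iff_even, Nat.cast_sum] at heven
    simp only [Matrix.mulVec, dotProduct, Pi.zero_apply]
    rw [← heven]
    refine sum_congr rfl fun i _ => ?_
    by_cases hi : ε i = 1
    · simp [x, hi]
    · simp only [x, M, hi, if_false, RingHom.mapMatrix_apply, Matrix.transpose_apply,
        Matrix.map_apply, eq_intCast, mul_one]
      rw [← Int.cast_natCast, Int.toNat_of_nonneg (hΘ i c)]
  have hdetM : Mᵀ.det ≠ 0 := by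
    rw [Matrix.det_transpose, ← RingHom.map_det, eq_intCast, Ne,
      ZMod.intCast_zmod_eq_zero_iff_dvd, Nat.cast_two, ← even_iff_two_dvd, Int.not_even_iff_odd]
    exact hdet
  have hx := Matrix.eq_zero_of_mulVec_eq_zero hdetM hMx
  refine hε.2 (funext fun i => ?_)
  have hxi := congrFun hx i
  rcases hε.1 i with hi | hi
  · norm_num [x, hi] at hxi
  · exact hi

lemma eval_qpoly_eq_zero {d : ℕ} {Θ : Matrix (Fin d) (Fin d) ℤ} (hΘ : ∀ i c, 0 ≤ Θ i c)
    (hdet : Odd Θ.det) {ε : Fin d → ℝ} (hε : ε ∈ puncturedCube d) :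
    eval ε (qpoly Θ) = 0 := by
  obtain ⟨c, hc⟩ := exists_prod_pow_eq_neg_one hΘ hdet hε
  rw [qpoly, map_prod]
  exact prod_eq_zero (mem_univ c) (by simp [hc])

lemma qpolyIdeal_le_vanishingIdeal (d : ℕ) :
    qpolyIdeal d ≤ vanishingIdeal ℝ (puncturedCube d) := by
  refine Ideal.span_le.2 ?_
  rintro _ ⟨Θ, h01, -, hdet, rfl⟩ ε hε
  have hΘ : ∀ i c, 0 ≤ Θ i c := fun i c => by rcases h01 i c with h | h <;> simp [h]
  have hodd : Odd Θ.det := by rcases hdet with h | h <;> simp [h]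
  change eval ε (qpoly Θ) = 0
  exact eval_qpoly_eq_zero hΘ hodd hε

lemma mem_span_sq_sub_one_of_eval_eq_zero {σ : Type*} [Finite σ] {f : MvPolynomial σ ℝ}
    (hf : ∀ x : σ → ℝ, (∀ i, x i = -1 ∨ x i = 1) → eval x f = 0) :
    f ∈ Ideal.span (Set.range fun i => X i ^ 2 - 1) := by
  obtain ⟨h, -, rfl⟩ := combinatorial_nullstellensatz_exists_linearCombination
    (fun _ => ({-1, 1} : Finset ℝ)) (fun _ => insert_nonempty _ _) f
    (fun x hx => hf x fun i => by simpa using hx i)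
  have hgen : (fun i => ∏ r ∈ ({-1, 1} : Finset ℝ), (X i - C r)) =
      fun i : σ => (X i ^ 2 - 1 : MvPolynomial σ ℝ) := by
    funext i
    rw [prod_pair (by norm_num)]
    simp only [map_neg, map_one]
    ring
  rw [hgen, Ideal.span, ← Finsupp.range_linearCombination]
  exact LinearMap.mem_range_self _ h

section Forest

variable {d : ℕ}

def forestMatrix (p : Fin d → Fin d) : Matrix (Fin d) (Fin d) ℤ :=
  Matrix.of fun i j => if i ∈ ({j, p j} : Finset (Fin d)) then 1 else 0

lemma forestMatrix_apply (p : Fin d → Fin d) (i j : Fin d) :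
    forestMatrix p i j = if i ∈ ({j, p j} : Finset (Fin d)) then 1 else 0 := rfl

lemma forestMatrix_det {p : Fin d → Fin d} (hp : ∀ j, p j ≤ j) : (forestMatrix p).det = 1 := by
  rw [Matrix.det_of_isUpperTriangular]
  · exact prod_eq_one fun j _ => by simp [forestMatrix_apply]
  · intro i j hji
    have hi : i ∉ ({j, p j} : Finset (Fin d)) := by
      simp only [mem_insert, mem_singleton, not_or]
      exact ⟨hji.ne', ((hp j).trans_lt hji).ne'⟩
    rw [forestMatrix_apply, if_neg hi]

lemma sum_forestMatrix_apply (p : Fin d → Fin d) (j : Fin d) :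
    ∑ i, forestMatrix p i j = #{j, p j} := by
  simp only [forestMatrix_apply]
  rw [sum_ite_mem, univ_inter, sum_const, nsmul_one]

lemma qpoly_forestMatrix (p : Fin d → Fin d) :
    qpoly (forestMatrix p) = ∏ j, C (1 / 2 : ℝ) * (1 + ∏ i ∈ {j, p j}, X i) := by
  refine prod_congr rfl fun j _ => ?_
  rw [← univ_inter {j, p j}, ← prod_ite_mem]
  congr 2
  refine prod_congr rfl fun i _ => ?_
  rw [forestMatrix_apply]
  split_ifs <;> simp

lemma prod_one_add_prod_X_mem {p : Fin d → Fin d} (hp : ∀ j, p j ≤ j) :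
    ∏ j, (1 + ∏ i ∈ {j, p j}, X i) ∈ qpolyIdeal d := by
  have hgen : qpoly (forestMatrix p) ∈ qpolyIdeal d := by
    refine Ideal.subset_span ⟨forestMatrix p, fun i j => ?_, fun j => ?_,
      Or.inl (forestMatrix_det hp), rfl⟩
    · rw [forestMatrix_apply]; split_ifs <;> simp
    · rw [sum_forestMatrix_apply]
      by_cases h : j = p j
      · simp [← h]
      · simp [card_pair h]
  have := Ideal.mul_mem_left _ (C (2 ^ d : ℝ)) hgen
  rwa [qpoly_forestMatrix, prod_mul_distrib, prod_const, card_univ, Fintype.card_fin,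
    ← map_pow, ← mul_assoc, ← map_mul, ← mul_pow, show (2 : ℝ) * (1 / 2) = 1 by norm_num,
    one_pow, map_one, one_mul] at this

lemma prod_one_add_X_mem (d : ℕ) : ∏ j, (1 + X j : MvPolynomial (Fin d) ℝ) ∈ qpolyIdeal d := by
  simpa using prod_one_add_prod_X_mem (p := id) fun j => le_rfl

end Forest

lemma rename_qpoly {d : ℕ} (π : Equiv.Perm (Fin d)) (Θ : Matrix (Fin d) (Fin d) ℤ) :
    rename π (qpoly Θ) = qpoly (Θ.submatrix π.symm id) := by
  simp only [qpoly, map_prod, map_mul, map_add, map_one, rename_C, map_pow, rename_X]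
  refine prod_congr rfl fun c _ => ?_
  rw [← Equiv.prod_comp π.symm]
  simp

lemma rename_mem_qpolyIdeal {d : ℕ} (π : Equiv.Perm (Fin d)) {q : MvPolynomial (Fin d) ℝ}
    (hq : q ∈ qpolyIdeal d) : rename π q ∈ qpolyIdeal d := by
  refine (Ideal.span_le.2 ?_ : qpolyIdeal d ≤ (qpolyIdeal d).comap (rename π)) hq
  rintro _ ⟨Θ, h01, hsum, hdet, rfl⟩
  refine Ideal.subset_span ⟨Θ.submatrix π.symm id, fun i c => h01 _ c, fun c => ?_, ?_,
    rename_qpoly π Θ⟩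
  · simp only [Matrix.submatrix_apply, id]
    rw [Equiv.sum_comp π.symm fun i => Θ i c]
    exact hsum c
  · rw [← Int.isUnit_iff, Matrix.det_permute] at *
    exact (Units.isUnit _).mul hdet

lemma mem_of_isCoprime {R : Type*} [CommSemiring R] {L : Ideal R} {a f g : R}
    (hfg : IsCoprime f g) (hf : a * f ∈ L) (hg : a * g ∈ L) : a ∈ L := by
  obtain ⟨u, v, huv⟩ := hfg
  have : a = u * (a * f) + v * (a * g) := by
    calc a = a * (u * f + v * g) := by rw [huv, mul_one]
      _ = u * (a * f) + v * (a * g) := by ring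
  rw [this]
  exact add_mem (L.mul_mem_left u hf) (L.mul_mem_left v hg)

lemma mem_of_mul_prod_filter_lt_mem {ι R : Type*} [LinearOrder ι] [CommSemiring R]
    {L : Ideal R} {f g : ι → R} {A : R} (s : Finset ι)
    (hfg : ∀ c ∈ s, IsCoprime (f c) (g c))
    (hf : ∀ c ∈ s, A * (f c * ∏ j ∈ s with j < c, g j) ∈ L) (hs : A * ∏ j ∈ s, g j ∈ L) :
    A ∈ L := by
  induction s using Finset.induction_on_max with
  | empty => simpa using hs
  | insert a s hlt ih =>
    have has : a ∉ s := fun h => lt_irrefl a (hlt a h)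
    have hfa := hf a (mem_insert_self a s)
    rw [filter_insert, if_neg (lt_irrefl a), filter_true_of_mem hlt] at hfa
    rw [prod_insert has] at hs
    refine ih (fun c hc => hfg c (mem_insert_of_mem hc)) (fun c hc => ?_) ?_
    · have hfc := hf c (mem_insert_of_mem hc)
      rwa [filter_insert, if_neg (hlt c hc).not_gt] at hfc
    · refine mem_of_isCoprime (hfg a (mem_insert_self a s)) ?_ ?_
      · simpa only [mul_assoc, mul_comm (f a)] using hfa
      · simpa only [mul_assoc, mul_comm (g a)] using hs

lemma mul_pow_card_mem_of_forall_subset {ι R : Type*} [DecidableEq ι] [CommSemiring R]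
    {L : Ideal R} {a b : ι → R} {x : R} {S : Finset ι}
    (hx : ∀ i ∈ S, x ∈ Ideal.span {a i, b i}) {A : R}
    (h : ∀ T ⊆ S, A * ∏ i ∈ S, (if i ∈ T then b i else a i) ∈ L) : A * x ^ #S ∈ L := by
  induction S using Finset.induction_on generalizing A with
  | empty => simpa using h ∅ (empty_subset _)
  | insert z S hz ih =>
    rw [card_insert_of_notMem hz, pow_succ', ← mul_assoc]
    refine ih (fun i hi => hx i (mem_insert_of_mem hi)) fun T hT => ?_
    obtain ⟨u, v, huv⟩ := Ideal.mem_span_pair.1 (hx z (mem_insert_self z S))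
    have hzT : z ∉ T := fun h => hz (hT h)
    have ha := h T (hT.trans (subset_insert z S))
    have hb := h (insert z T) (insert_subset_insert z hT)
    have hS : ∏ i ∈ S, (if i ∈ insert z T then b i else a i) =
        ∏ i ∈ S, (if i ∈ T then b i else a i) :=
      prod_congr rfl fun i hi => by simp [ne_of_mem_of_not_mem hi hz]
    rw [prod_insert hz, if_neg hzT] at ha
    rw [prod_insert hz, if_pos (mem_insert_self z T), hS] at hb
    rw [← huv]
    have key : A * (u * a z + v * b z) * ∏ i ∈ S, (if i ∈ T then b i else a i) =
        u * (A * (a z * ∏ i ∈ S, (if i ∈ T then b i else a i))) +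
          v * (A * (b z * ∏ i ∈ S, (if i ∈ T then b i else a i))) := by ring
    rw [key]
    exact add_mem (L.mul_mem_left u ha) (L.mul_mem_left v hb)

section RootZero

variable {n : ℕ}

lemma prod_univ_eq_mul_prod_Ioo_mul_prod_Ioi {M : Type*} [CommMonoid M] {c : Fin (n + 1)}
    (hc : c ≠ 0) (f : Fin (n + 1) → M) :
    ∏ j, f j = f 0 * f c * ((∏ j ∈ Ioo 0 c, f j) * ∏ j ∈ Ioi c, f j) := by
  have hpos : 0 < c := Fin.pos_iff_ne_zero.2 hc
  have huniv : (univ : Finset (Fin (n + 1))) = insert 0 (insert c (Ioo 0 c ∪ Ioi c)) := by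
    ext j
    simp only [mem_univ, mem_insert, mem_union, mem_Ioo, mem_Ioi, true_iff]
    rcases lt_trichotomy j c with h | h | h
    · rcases (Fin.zero_le j).eq_or_lt with h0 | h0
      · exact Or.inl h0.symm
      · exact Or.inr (Or.inr (Or.inl ⟨h0, h⟩))
    · exact Or.inr (Or.inl h)
    · exact Or.inr (Or.inr (Or.inr h))
  rw [huniv, prod_insert, prod_insert, prod_union, mul_assoc]
  · exact disjoint_left.2 fun j hj hj' => (mem_Ioo.1 hj).2.not_gt (mem_Ioi.1 hj')
  · simp
  · simp [hc.symm]

lemma one_sub_sq_mul_prod_mem {c : Fin (n + 1)} (hc : c ≠ 0) {T : Finset (Fin (n + 1))}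
    (hT : T ⊆ Ioi c) :
    (1 - X 0 ^ 2) * (∏ j ∈ Ioo 0 c, (1 + X j)) *
      ∏ j ∈ Ioi c, (if j ∈ T then 1 + X j * X c else 1 + X j) ∈ qpolyIdeal (n + 1) := by
  set par : Bool → Fin (n + 1) → Fin (n + 1) :=
    fun σ j => if j = c then (if σ then 0 else c) else if j ∈ T then c else j
  have hpar : ∀ σ j, par σ j ≤ j := by
    intro σ j
    simp only [par]
    split_ifs with hjc _ hjT
    · exact Fin.zero_le j
    · exact hjc.ge
    · exact (mem_Ioi.1 (hT hjT)).le
    · exact le_rfl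
  have hprod : ∀ σ, ∏ j, (1 + ∏ i ∈ {j, par σ j}, (X i : MvPolynomial (Fin (n + 1)) ℝ)) =
      (1 + X 0) * (if σ then 1 + X c * X 0 else 1 + X c) * ((∏ j ∈ Ioo 0 c, (1 + X j)) *
        ∏ j ∈ Ioi c, (if j ∈ T then 1 + X j * X c else 1 + X j)) := by
    intro σ
    have hX : ∀ j k : Fin (n + 1), ∏ i ∈ {j, k}, (X i : MvPolynomial (Fin (n + 1)) ℝ) =
        if k = j then X j else X j * X k := by
      intro j k
      split_ifs with h
      · simp [h]
      · exact prod_pair (Ne.symm h)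
    have hTc : ∀ j ∈ T, c < j := fun j hj => mem_Ioi.1 (hT hj)
    rw [prod_univ_eq_mul_prod_Ioo_mul_prod_Ioi hc]
    congr 2
    · have h0T : (0 : Fin (n + 1)) ∉ T := fun h => (Fin.zero_le c).not_gt (hTc 0 h)
      simp [par, Ne.symm hc, h0T]
    · cases σ <;> simp [par, hX, Ne.symm hc]
    · refine prod_congr rfl fun j hj => ?_
      have hjc := (mem_Ioo.1 hj).2
      have hjT : j ∉ T := fun h => (hTc j h).not_gt hjc
      simp [par, hjc.ne, hjT]
    · refine prod_congr rfl fun j hj => ?_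
      have hcj := mem_Ioi.1 hj
      by_cases hjT : j ∈ T <;> simp [par, hX, hcj.ne', hcj.ne, hjT]
  have := sub_mem (prod_one_add_prod_X_mem (hpar true))
    (Ideal.mul_mem_left _ (X 0) (prod_one_add_prod_X_mem (hpar false)))
  rw [hprod, hprod] at this
  convert this using 1
  simp only [if_true, Bool.false_eq_true, if_false]
  ring

lemma one_sub_sq_mul_pow_mul_prod_mem {c : Fin (n + 1)} (hc : c ≠ 0) :
    (1 - X 0 ^ 2) * ((1 - X c) ^ #(Ioi c) * ∏ j ∈ Ioo 0 c, (1 + X j)) ∈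
      qpolyIdeal (n + 1) := by
  have hx : ∀ j ∈ Ioi c, (1 - X c : MvPolynomial (Fin (n + 1)) ℝ) ∈
      Ideal.span {1 + X j, 1 + X j * X c} :=
    fun j _ => Ideal.mem_span_pair.2 ⟨-X c, 1, by ring⟩
  have := mul_pow_card_mem_of_forall_subset hx fun T hT => one_sub_sq_mul_prod_mem hc hT
  convert this using 1
  ring

lemma isCoprime_one_sub_X_one_add_X {σ : Type*} (i : σ) :
    IsCoprime (1 - X i : MvPolynomial σ ℝ) (1 + X i) :=
  ⟨C (1 / 2), C (1 / 2), by
    rw [← mul_add, sub_add_add_cancel, ← one_add_one_eq_two, ← map_one C, ← map_add, ← map_mul]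
    norm_num⟩

lemma X_zero_sq_sub_one_mem_qpolyIdeal :
    (X 0 ^ 2 - 1 : MvPolynomial (Fin (n + 1)) ℝ) ∈ qpolyIdeal (n + 1) := by
  rw [← neg_sub, neg_mem_iff]
  refine mem_of_mul_prod_filter_lt_mem (univ.erase 0) (f := fun c => (1 - X c) ^ #(Ioi c))
    (g := fun c => 1 + X c) (fun c _ => (isCoprime_one_sub_X_one_add_X c).pow_left)
    (fun c hc => ?_) ?_
  · have hfilter : {j ∈ univ.erase (0 : Fin (n + 1)) | j < c} = Ioo 0 c := by
      ext j
      simp [Fin.pos_iff_ne_zero, and_comm]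
    rw [hfilter]
    exact one_sub_sq_mul_pow_mul_prod_mem (ne_of_mem_erase hc)
  · have := Ideal.mul_mem_left _ (1 - X 0) (prod_one_add_X_mem (n + 1))
    rw [← mul_prod_erase univ _ (mem_univ 0)] at this
    convert this using 1
    ring

end RootZero

lemma X_sq_sub_one_mem_qpolyIdeal {d : ℕ} (i : Fin d) :
    (X i ^ 2 - 1 : MvPolynomial (Fin d) ℝ) ∈ qpolyIdeal d := by
  obtain ⟨n, rfl⟩ := Nat.exists_eq_add_one_of_ne_zero i.pos.ne'
  simpa using rename_mem_qpolyIdeal (Equiv.swap 0 i) X_zero_sq_sub_one_mem_qpolyIdeal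

theorem vanishingIdeal_puncturedCube (d : ℕ) :
    vanishingIdeal ℝ (puncturedCube d) = qpolyIdeal d := by
  refine le_antisymm (fun p hp => ?_) (qpolyIdeal_le_vanishingIdeal d)
  set a := eval (fun _ => 1) p / 2 ^ d
  have hcube : p - C a * ∏ j, (1 + X j) ∈ qpolyIdeal d := by
    refine Ideal.span_le.2 ?_ (mem_span_sq_sub_one_of_eval_eq_zero fun ε hε => ?_)
    · rintro _ ⟨i, rfl⟩
      exact X_sq_sub_one_mem_qpolyIdeal i
    simp only [map_sub, map_mul, eval_C, map_prod, map_add, map_one, eval_X]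
    by_cases h1 : ε = fun _ => 1
    · subst h1
      simp [a, one_add_one_eq_two]
    · obtain ⟨i, hi⟩ := Function.ne_iff.1 h1
      have hp0 : eval ε p = 0 := hp ε ⟨hε, h1⟩
      rw [hp0, prod_eq_zero (mem_univ i) (by rw [(hε i).resolve_right hi]; norm_num)]
      simp
  simpa using add_mem hcube (Ideal.mul_mem_left _ (C a) (prod_one_add_X_mem d))

theorem stmt_3 (d : ℕ) (p : MvPolynomial (Fin d) ℝ) :
    (∀ ε : Fin d → ℝ, (∀ i, ε i = -1 ∨ ε i = 1) → ε ≠ (fun _ => 1) →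
      eval ε p = 0) ↔
    p ∈ Ideal.span
      {q : MvPolynomial (Fin d) ℝ | ∃ Θ : Matrix (Fin d) (Fin d) ℤ,
        (∀ i c, Θ i c = 0 ∨ Θ i c = 1) ∧
        (∀ c, (∑ i, Θ i c) = 1 ∨ (∑ i, Θ i c) = 2) ∧
        (Θ.det = 1 ∨ Θ.det = -1) ∧
        q = qpoly Θ} := by
  change _ ↔ p ∈ qpolyIdeal d
  rw [← vanishingIdeal_puncturedCube, mem_vanishingIdeal_iff]
  exact ⟨fun h ε hε => h ε hε.1 hε.2, fun h ε h₁ h₂ => h ε ⟨h₁, h₂⟩⟩
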